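/- arXiv:1210.6325 — 2 statements merged into one kernel-verified Lean document; each statement's English description precedes it below -/
import Mathlib

section
/- Let V : ℤ → ℝ, let m < n be integers, and let E₀ ∈ ℝ satisfy |tr A[V](E₀,m,n)| < 2. Then on the open set of energies E with |tr A[V](E,m,n)| < 2, the function E ↦ Θ(A[V](E,m,n)) is differentiable at E₀ and (d/dE) Θ(A[V](E,m,n))|_{E=E₀} < 0. (Lemma 5.1.) -/
open MeasureTheory Filter Real
noncomputable section

attribute [local instance] Matrix.normedAddCommGroup Matrix.normedSpace
attribute [local instance] Classical.propDecidable

/-- Operator norm of a 2×2 real matrix acting on the Euclidean plane. -/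
def opNorm (A : Matrix (Fin 2) (Fin 2) ℝ) : ℝ := ‖Matrix.toEuclideanCLM (𝕜 := ℝ) A‖

/-- The rotation matrix of angle `2πθ`. -/
def rot (θ : ℝ) : Matrix (Fin 2) (Fin 2) ℝ :=
  !![Real.cos (2 * π * θ), -Real.sin (2 * π * θ);
     Real.sin (2 * π * θ), Real.cos (2 * π * θ)]

/-- The Möbius action of a real 2×2 matrix on ℂ. -/
def moebius (A : Matrix (Fin 2) (Fin 2) ℝ) (z : ℂ) : ℂ :=
  ((A 0 0 : ℝ) * z + (A 0 1 : ℝ)) / ((A 1 0 : ℝ) * z + (A 1 1 : ℝ))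

/-- The fixed point `u(A)` in the upper half-plane of an elliptic `A ∈ SL(2,ℝ)`
(junk value `i` if there is none). -/
def fixedPt (A : Matrix (Fin 2) (Fin 2) ℝ) : ℂ :=
  if h : ∃ z : ℂ, 0 < z.im ∧ moebius A z = z then h.choose else Complex.I

/-- `θ ∈ (0,1/2) ∪ (1/2,1)` is a rotation number for `A` if `A` is conjugate in `SL(2,ℝ)`
to the rotation `R_θ`. -/
def IsRotationNumber (A : Matrix (Fin 2) (Fin 2) ℝ) (θ : ℝ) : Prop :=
  (θ ∈ Set.Ioo (0:ℝ) (1/2) ∪ Set.Ioo (1/2:ℝ) 1) ∧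
    ∃ B : Matrix (Fin 2) (Fin 2) ℝ, B.det = 1 ∧ B * A * B⁻¹ = rot θ

/-- `Θ(A)`: the rotation number of an elliptic `A ∈ SL(2,ℝ)` (junk value `0` if none). -/
def Theta (A : Matrix (Fin 2) (Fin 2) ℝ) : ℝ :=
  if h : ∃ θ : ℝ, IsRotationNumber A θ then h.choose else 0

/-- The hyperbolic distance on the upper half-plane. -/
def hypDist (z w : ℂ) : ℝ :=
  2 * Real.arsinh (‖z - w‖ / (2 * Real.sqrt (z.im * w.im)))

/-- The one-step matrix `[[E − V(n), −1],[1,0]]` of the discrete Schrödinger cocycle. -/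
def schStep (V : ℤ → ℝ) (E : ℝ) (n : ℤ) : Matrix (Fin 2) (Fin 2) ℝ :=
  !![E - V n, -1; 1, 0]

private def transferAux (V : ℤ → ℝ) (E : ℝ) (m : ℤ) : ℕ → Matrix (Fin 2) (Fin 2) ℝ
  | 0 => 1
  | k + 1 => schStep V E (m + k) * transferAux V E m k

/-- The discrete transfer matrix `A[V](E,m,n)` (for `n ≥ m`): `A[V](E,m,m) = Id` and
`A[V](E,m,n+1) = [[E − V(n), −1],[1,0]] · A[V](E,m,n)`. -/
def transfer (V : ℤ → ℝ) (E : ℝ) (m n : ℤ) : Matrix (Fin 2) (Fin 2) ℝ :=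
  transferAux V E m (n - m).toNat

/-! The rotation number of an elliptic `A ∈ SL(2,ℝ)` is read off from `tr A` and the sign of the
entry `A₁₀`: it is `arccos (tr A / 2) / 2π` if `A₁₀ > 0` and `1 - arccos (tr A / 2) / 2π` if
`A₁₀ < 0`. Indeed `A = B⁻¹ R_θ B` gives `cos 2πθ = tr A / 2` and
`A₁₀ = sin 2πθ · (B₀₀² + B₁₀²)`, and conversely an upper triangular `B` conjugates `A` to `R_θ`
for the angle so determined. As the sign of `A₁₀` is locally constant,
`d/dE Θ(A(E)) = -(tr A)' / (4π sin 2πΘ)`, which is negative as soon as `A₁₀ · (tr A)' > 0`.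

For the transfer matrices `Aⱼ = A[V](E,m,m+j)` the product rule gives
`A⁻¹ ∂A/∂E = ∑ⱼ Aⱼ⁻¹ N Aⱼ` with `N = S⁻¹ ∂S/∂E = !![0, 0; -1, 0]` for every one-step matrix `S`.
Hence `(tr A)' = ∑ⱼ tr (A Aⱼ⁻¹ N Aⱼ)`, and each term is the value of the quadratic form
`w ↦ c w₁² + (a - d) w₀ w₁ - b w₀²` of `A = !![a, b; c, d]` at the first row `w` of `Aⱼ`. Its
discriminant is `tr² A - 4 < 0`, so it is definite with the sign of `c = A₁₀`. -/

open Topology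

theorem HasDerivAt.matrix_mul {𝕜 : Type*} [NontriviallyNormedField 𝕜] {l p q : Type*}
    [Fintype p] [Fintype q] {f : 𝕜 → Matrix l p 𝕜} {g : 𝕜 → Matrix p q 𝕜}
    {f' : Matrix l p 𝕜} {g' : Matrix p q 𝕜} {x : 𝕜} (hf : HasDerivAt f f' x)
    (hg : HasDerivAt g g' x) : HasDerivAt (fun y => f y * g y) (f' * g x + f x * g') x := by
  refine hasDerivAt_pi.2 fun i => hasDerivAt_pi.2 fun j => ?_
  simp only [Matrix.add_apply, Matrix.mul_apply, ← Finset.sum_add_distrib]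
  exact HasDerivAt.fun_sum fun r _ =>
    (hasDerivAt_pi.1 (hasDerivAt_pi.1 hf i) r).mul (hasDerivAt_pi.1 (hasDerivAt_pi.1 hg r) j)

theorem HasDerivAt.matrix_trace {𝕜 : Type*} [NontriviallyNormedField 𝕜] {l : Type*} [Fintype l]
    {f : 𝕜 → Matrix l l 𝕜} {f' : Matrix l l 𝕜} {x : 𝕜} (hf : HasDerivAt f f' x) :
    HasDerivAt (fun y => (f y).trace) f'.trace x :=
  HasDerivAt.fun_sum fun i _ => hasDerivAt_pi.1 (hasDerivAt_pi.1 hf i) i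

theorem inv_fin_two_of_det_eq_one {R : Type*} [CommRing R] {a b c d : R} (h : a * d - b * c = 1) :
    (!![a, b; c, d])⁻¹ = !![d, -b; -c, a] := by
  rw [Matrix.inv_def, Matrix.det_fin_two_of, h, Matrix.adjugate_fin_two_of, Ring.inverse_one,
    one_smul]

theorem apply_one_zero_ne_zero_of_abs_trace_lt_two {A : Matrix (Fin 2) (Fin 2) ℝ}
    (hA : A.det = 1) (htr : |A.trace| < 2) : A 1 0 ≠ 0 := by
  intro h
  rw [Matrix.det_fin_two, h, mul_zero, sub_zero] at hA
  rw [Matrix.trace_fin_two, abs_lt] at htr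
  nlinarith [sq_nonneg (A 0 0 - A 1 1)]

theorem pos_mul_trace_mul_conj {A P : Matrix (Fin 2) (Fin 2) ℝ} (hA : A.det = 1)
    (htr : |A.trace| < 2) (hP : P.det = 1) :
    0 < A 1 0 * (A * (P⁻¹ * !![0, 0; -1, 0] * P)).trace := by
  have hc := apply_one_zero_ne_zero_of_abs_trace_lt_two hA htr
  obtain ⟨a, b, c, d, rfl⟩ : ∃ a b c d, A = !![a, b; c, d] := ⟨_, _, _, _, A.eta_fin_two⟩
  obtain ⟨x, y, z, w, rfl⟩ : ∃ x y z w, P = !![x, y; z, w] := ⟨_, _, _, _, P.eta_fin_two⟩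
  rw [Matrix.det_fin_two_of] at hA hP
  rw [Matrix.trace_fin_two_of, abs_lt] at htr
  simp only [Matrix.of_apply, Matrix.cons_val_one, Matrix.cons_val_zero] at hc ⊢
  have hsq : 0 < (2 * c * y + (a - d) * x) ^ 2 + (4 - (a + d) ^ 2) * x ^ 2 := by
    rcases eq_or_ne x 0 with rfl | hx
    · have hy : y ≠ 0 := by rintro rfl; simp at hP
      simpa using (by positivity : 0 < (2 * c * y) ^ 2)
    · have : 0 < 4 - (a + d) ^ 2 := by nlinarith
      positivity
  refine pos_of_mul_pos_right (?_ : (0 : ℝ) < 4 * _) zero_le_four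
  convert hsq using 1
  rw [inv_fin_two_of_det_eq_one hP, Matrix.mul_fin_two, Matrix.mul_fin_two, Matrix.mul_fin_two,
    Matrix.trace_fin_two_of]
  linear_combination (4 * x ^ 2) * hA

theorem sin_two_pi_mul_pos {θ : ℝ} (hθ : θ ∈ Set.Ioo (0 : ℝ) (1 / 2)) : 0 < sin (2 * π * θ) := by
  obtain ⟨h0, h1⟩ := hθ
  exact sin_pos_of_pos_of_lt_pi (by positivity) (by nlinarith [pi_pos])

theorem sin_two_pi_mul_neg {θ : ℝ} (hθ : θ ∈ Set.Ioo (1 / 2 : ℝ) 1) : sin (2 * π * θ) < 0 := by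
  obtain ⟨h0, h1⟩ := hθ
  rw [← sin_sub_two_pi]
  exact sin_neg_of_neg_of_neg_pi_lt (by nlinarith [pi_pos]) (by nlinarith [pi_pos])

theorem exists_conj_eq_rot {A : Matrix (Fin 2) (Fin 2) ℝ} {θ : ℝ} (hA : A.det = 1)
    (hcos : cos (2 * π * θ) = A.trace / 2) (hsin : 0 < A 1 0 * sin (2 * π * θ)) :
    ∃ B : Matrix (Fin 2) (Fin 2) ℝ, B.det = 1 ∧ B * A * B⁻¹ = rot θ := by
  obtain ⟨a, b, c, d, rfl⟩ : ∃ a b c d, A = !![a, b; c, d] := ⟨_, _, _, _, A.eta_fin_two⟩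
  have hsc := sin_sq_add_cos_sq (2 * π * θ)
  rw [rot]
  generalize cos (2 * π * θ) = κ at *
  generalize sin (2 * π * θ) = σ at *
  rw [Matrix.det_fin_two_of] at hA
  rw [Matrix.trace_fin_two_of] at hcos
  simp only [Matrix.of_apply, Matrix.cons_val_one, Matrix.cons_val_zero] at hsin
  have hσ : σ ≠ 0 := by rintro rfl; simp at hsin
  have hcσ : 0 < c / σ := div_pos_iff.2 (mul_pos_iff.1 hsin)
  -- for an upper triangular `B`, the bottom row of `B * A = R * B` forces `B₀₀ ^ 2 = c / σ`
  set r := √(c / σ)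
  have hr : r ≠ 0 := (Real.sqrt_pos.2 hcσ).ne'
  have hr2 : r ^ 2 * σ = c := by rw [Real.sq_sqrt hcσ.le, div_mul_cancel₀ _ hσ]
  have hB : r * (1 / r) - (κ - a) / (σ * r) * 0 = 1 := by
    rw [mul_zero, sub_zero, mul_one_div_cancel hr]
  refine ⟨_, by rw [Matrix.det_fin_two_of, hB], ?_⟩
  suffices h : !![r, (κ - a) / (σ * r); 0, 1 / r] * !![a, b; c, d] =
      !![κ, -σ; σ, κ] * !![r, (κ - a) / (σ * r); 0, 1 / r] by
    rw [h, Matrix.mul_nonsing_inv_cancel_right _ _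
      (by rw [Matrix.det_fin_two_of, hB]; exact isUnit_one)]
  rw [Matrix.mul_fin_two, Matrix.mul_fin_two, EmbeddingLike.apply_eq_iff_eq]
  simp only [Matrix.vecCons_inj, and_true]
  refine ⟨⟨?_, ?_⟩, ?_, ?_⟩ <;> field_simp
  · linear_combination (a - κ) * hr2
  · linear_combination b * hr2 - hA - 2 * κ * hcos + hsc
  · linear_combination -hr2
  · linear_combination -2 * hcos

theorem IsRotationNumber.cos_eq_and_pos_mul_sin {A : Matrix (Fin 2) (Fin 2) ℝ} {θ : ℝ}
    (h : IsRotationNumber A θ) :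
    cos (2 * π * θ) = A.trace / 2 ∧ 0 < A 1 0 * sin (2 * π * θ) := by
  obtain ⟨hθ, B, hB, hconj⟩ := h
  have hsin : sin (2 * π * θ) ≠ 0 := by
    rcases hθ with hθ | hθ
    exacts [(sin_two_pi_mul_pos hθ).ne', (sin_two_pi_mul_neg hθ).ne]
  have hBu : IsUnit B.det := by rw [hB]; exact isUnit_one
  have hA : A = B⁻¹ * rot θ * B := by
    rw [← hconj, Matrix.mul_assoc, Matrix.mul_assoc, Matrix.nonsing_inv_mul _ hBu, Matrix.mul_one,
      Matrix.nonsing_inv_mul_cancel_left _ _ hBu]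
  obtain ⟨p, q, r, s, rfl⟩ : ∃ p q r s, B = !![p, q; r, s] := ⟨_, _, _, _, B.eta_fin_two⟩
  rw [Matrix.det_fin_two_of] at hB
  have hcol : 0 < p ^ 2 + r ^ 2 := by
    rcases eq_or_ne p 0 with rfl | hp
    · have : r ≠ 0 := by rintro rfl; simp at hB
      positivity
    · positivity
  rw [hA, rot, inv_fin_two_of_det_eq_one hB, Matrix.mul_fin_two, Matrix.mul_fin_two,
    Matrix.trace_fin_two_of]
  simp only [Matrix.of_apply, Matrix.cons_val_one, Matrix.cons_val_zero]
  constructor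
  · linear_combination -cos (2 * π * θ) * hB
  · exact (mul_pos (mul_self_pos.2 hsin) hcol).trans_eq (by ring)

def ellipticAngle (A : Matrix (Fin 2) (Fin 2) ℝ) : ℝ :=
  (if 0 < A 1 0 then arccos (A.trace / 2) else 2 * π - arccos (A.trace / 2)) / (2 * π)

theorem eq_ellipticAngle {A : Matrix (Fin 2) (Fin 2) ℝ} {θ : ℝ}
    (hθ : θ ∈ Set.Ioo (0 : ℝ) (1 / 2) ∪ Set.Ioo (1 / 2 : ℝ) 1)
    (hcos : cos (2 * π * θ) = A.trace / 2) (hsin : 0 < A 1 0 * sin (2 * π * θ)) :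
    θ = ellipticAngle A := by
  rw [ellipticAngle, ← hcos]
  rcases hθ with hθ | hθ
  · have hA : 0 < A 1 0 := pos_of_mul_pos_left hsin (sin_two_pi_mul_pos hθ).le
    rw [if_pos hA, arccos_cos (by nlinarith [hθ.1, pi_pos]) (by nlinarith [hθ.2, pi_pos])]
    field_simp
  · have hA : ¬ 0 < A 1 0 := fun hA => (mul_pos_iff_of_pos_left hA).1 hsin |>.not_gt
      (sin_two_pi_mul_neg hθ)
    rw [if_neg hA, ← cos_two_pi_sub,
      arccos_cos (by nlinarith [hθ.2, pi_pos]) (by nlinarith [hθ.1, pi_pos])]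
    field_simp
    ring

theorem ellipticAngle_spec {A : Matrix (Fin 2) (Fin 2) ℝ} (hA : A.det = 1) (htr : |A.trace| < 2) :
    ellipticAngle A ∈ Set.Ioo (0 : ℝ) (1 / 2) ∪ Set.Ioo (1 / 2 : ℝ) 1 ∧
      cos (2 * π * ellipticAngle A) = A.trace / 2 ∧
      0 < A 1 0 * sin (2 * π * ellipticAngle A) := by
  obtain ⟨ht₁, ht₂⟩ : -1 < A.trace / 2 ∧ A.trace / 2 < 1 := by
    rw [abs_lt] at htr; constructor <;> linarith
  have hφ₀ : 0 < arccos (A.trace / 2) := arccos_pos.2 ht₂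
  have hφπ : arccos (A.trace / 2) < π := arccos_lt_pi.2 ht₁
  have hcos : cos (arccos (A.trace / 2)) = A.trace / 2 := cos_arccos ht₁.le ht₂.le
  have hsin : 0 < sin (arccos (A.trace / 2)) := sin_pos_of_pos_of_lt_pi hφ₀ hφπ
  have h2π : 2 * π ≠ 0 := by positivity
  rw [ellipticAngle, mul_div_cancel₀ _ h2π]
  rcases (apply_one_zero_ne_zero_of_abs_trace_lt_two hA htr).lt_or_gt with h | h
  · rw [if_neg h.not_gt, cos_two_pi_sub, sin_two_pi_sub]
    refine ⟨Or.inr ⟨?_, ?_⟩, hcos, by nlinarith⟩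
    · rw [lt_div_iff₀ (by positivity)]; linarith
    · rw [div_lt_one (by positivity)]; linarith
  · rw [if_pos h]
    refine ⟨Or.inl ⟨by positivity, ?_⟩, hcos, mul_pos h hsin⟩
    rw [div_lt_iff₀ (by positivity)]; linarith

theorem isRotationNumber_iff {A : Matrix (Fin 2) (Fin 2) ℝ} {θ : ℝ} (hA : A.det = 1) :
    IsRotationNumber A θ ↔ θ ∈ Set.Ioo (0 : ℝ) (1 / 2) ∪ Set.Ioo (1 / 2 : ℝ) 1 ∧
      cos (2 * π * θ) = A.trace / 2 ∧ 0 < A 1 0 * sin (2 * π * θ) :=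
  ⟨fun h => ⟨h.1, h.cos_eq_and_pos_mul_sin⟩, fun ⟨hθ, hcos, hsin⟩ =>
    ⟨hθ, exists_conj_eq_rot hA hcos hsin⟩⟩

theorem Theta_eq_ellipticAngle {A : Matrix (Fin 2) (Fin 2) ℝ} (hA : A.det = 1)
    (htr : |A.trace| < 2) : Theta A = ellipticAngle A := by
  have hex : ∃ θ, IsRotationNumber A θ :=
    ⟨_, (isRotationNumber_iff hA).2 (ellipticAngle_spec hA htr)⟩
  obtain ⟨hθ, hcos, hsin⟩ := (isRotationNumber_iff hA).1 hex.choose_spec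
  rw [Theta, dif_pos hex]
  exact eq_ellipticAngle hθ hcos hsin

theorem exists_neg_hasDerivAt_Theta_comp {A : ℝ → Matrix (Fin 2) (Fin 2) ℝ}
    {A' : Matrix (Fin 2) (Fin 2) ℝ} {x : ℝ} (hdet : ∀ᶠ y in 𝓝 x, (A y).det = 1)
    (hA : HasDerivAt A A' x) (htr : |(A x).trace| < 2) (hpos : 0 < A x 1 0 * A'.trace) :
    ∃ L < 0, HasDerivAt (fun y => Theta (A y)) L x := by
  have h10 : ContinuousAt (fun y => A y 1 0) x :=
    (hasDerivAt_pi.1 (hasDerivAt_pi.1 hA 1) 0).continuousAt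
  have htr' : HasDerivAt (fun y => (A y).trace) A'.trace x := hA.matrix_trace
  have hell : ∀ᶠ y in 𝓝 x, Theta (A y) = ellipticAngle (A y) := by
    filter_upwards [hdet, htr'.continuousAt.abs.eventually_lt continuousAt_const htr]
      with y hdet htr using Theta_eq_ellipticAngle hdet htr
  obtain ⟨ht₁, ht₂⟩ : (A x).trace / 2 ≠ -1 ∧ (A x).trace / 2 ≠ 1 := by
    rw [abs_lt] at htr; constructor <;> intro h <;> linarith
  have harccos := (hasDerivAt_arccos ht₁ ht₂).comp x (htr'.div_const 2)
  set d := 1 / √(1 - ((A x).trace / 2) ^ 2)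
  have hd : 0 < d := by
    rw [abs_lt] at htr
    have : 0 < 1 - ((A x).trace / 2) ^ 2 := by nlinarith
    positivity
  rcases (apply_one_zero_ne_zero_of_abs_trace_lt_two hdet.self_of_nhds htr).lt_or_gt with h | h
  · refine ⟨-(-d * (A'.trace / 2)) / (2 * π), ?_, ?_⟩
    · have : A'.trace < 0 := neg_of_mul_pos_right hpos h.le
      exact div_neg_of_neg_of_pos (by nlinarith) (by positivity)
    · refine ((harccos.const_sub (2 * π)).div_const (2 * π)).congr_of_eventuallyEq ?_
      filter_upwards [hell, h10.eventually_lt continuousAt_const h] with y hy h using by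
        rw [hy, ellipticAngle, if_neg h.not_gt]; rfl
  · refine ⟨-d * (A'.trace / 2) / (2 * π), ?_, ?_⟩
    · have : 0 < A'.trace := pos_of_mul_pos_right hpos h.le
      exact div_neg_of_neg_of_pos (by nlinarith) (by positivity)
    · refine (harccos.div_const (2 * π)).congr_of_eventuallyEq ?_
      filter_upwards [hell, continuousAt_const.eventually_lt h10 h] with y hy h using by
        rw [hy, ellipticAngle, if_pos h]; rfl

theorem hasDerivAt_schStep (V : ℤ → ℝ) (k : ℤ) (E : ℝ) :
    HasDerivAt (fun E => schStep V E k) !![1, 0; 0, 0] E := by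
  have : (fun E => schStep V E k) = fun E => E • !![1, 0; 0, 0] + !![-V k, -1; 1, 0] := by
    funext E; ext i j; fin_cases i <;> fin_cases j <;> simp [schStep, sub_eq_add_neg]
  have h := ((hasDerivAt_id E).smul_const (!![1, 0; 0, 0] : Matrix (Fin 2) (Fin 2) ℝ)).add_const
    !![-V k, -1; 1, 0]
  rw [one_smul] at h
  rw [this]
  exact h

theorem det_transferAux (V : ℤ → ℝ) (E : ℝ) (m : ℤ) (k : ℕ) : (transferAux V E m k).det = 1 := by
  induction k with
  | zero => simp [transferAux]
  | succ k ih =>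
    rw [transferAux, Matrix.det_mul, ih, mul_one]
    simp [schStep, Matrix.det_fin_two_of]

theorem schStep_mul_eq_deriv (V : ℤ → ℝ) (E : ℝ) (k : ℤ) :
    schStep V E k * !![0, 0; -1, 0] = !![1, 0; 0, 0] := by
  simp [schStep]

theorem hasDerivAt_transferAux (V : ℤ → ℝ) (m : ℤ) (k : ℕ) (E : ℝ) :
    HasDerivAt (fun E => transferAux V E m k) (transferAux V E m k *
      ∑ j ∈ Finset.range k, (transferAux V E m j)⁻¹ * !![0, 0; -1, 0] * transferAux V E m j) E := by
  induction k with
  | zero =>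
    simp only [transferAux, Finset.range_zero, Finset.sum_empty, mul_zero]
    exact hasDerivAt_const E 1
  | succ k ih =>
    convert (hasDerivAt_schStep V (m + k) E).matrix_mul ih using 1
    · rfl
    have hstep : transferAux V E m (k + 1) = schStep V E (m + k) * transferAux V E m k := rfl
    rw [Finset.sum_range_succ, mul_add, add_comm, hstep, mul_assoc,
      ← schStep_mul_eq_deriv V E (m + k), mul_assoc, mul_assoc,
      Matrix.mul_nonsing_inv_cancel_left _ _ (by simp [det_transferAux])]
    simp only [mul_assoc]

theorem pos_mul_trace_transferAux_mul_sum (V : ℤ → ℝ) (m : ℤ) {k : ℕ} (E : ℝ) (hk : 0 < k)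
    (htr : |(transferAux V E m k).trace| < 2) :
    0 < transferAux V E m k 1 0 * (transferAux V E m k * ∑ j ∈ Finset.range k,
      (transferAux V E m j)⁻¹ * !![0, 0; -1, 0] * transferAux V E m j).trace := by
  rw [Finset.mul_sum, Matrix.trace_sum, Finset.mul_sum]
  exact Finset.sum_pos (fun j _ => pos_mul_trace_mul_conj (det_transferAux V E m k) htr
    (det_transferAux V E m j)) (Finset.nonempty_range_iff.2 hk.ne')

/-- Monotonicity of the rotation number of discrete transfer matrices (Lemma 5.1):
if `m < n` and `|tr A[V](E₀,m,n)| < 2` then `E ↦ Θ(A[V](E,m,n))` has a negative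
derivative at `E₀`. -/
theorem stmt12 (V : ℤ → ℝ) (m n : ℤ) (hmn : m < n) (E₀ : ℝ)
    (htr : |(transfer V E₀ m n).trace| < 2) :
    ∃ L : ℝ, L < 0 ∧ HasDerivAt (fun E => Theta (transfer V E m n)) L E₀ :=
  exists_neg_hasDerivAt_Theta_comp (.of_forall fun E => det_transferAux V E m _)
    (hasDerivAt_transferAux V m _ E₀) htr
    (pos_mul_trace_transferAux_mul_sum V m E₀ (by omega) htr)
end
end

section
/- For every n ≥ 1 and all A₁, …, Aₙ ∈ SL(2,ℝ), one has ∫₀¹ N(Aₙ R_θ Aₙ₋₁ R_θ ⋯ A₁ R_θ) dθ = Σ_{j=1}^{n} N(A_j), where N(A) := log((‖A‖ + ‖A‖^{−1})/2). (The Parseval-type identity (2) of Section 1.1.) -/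
/-!
Identify the Euclidean plane with `ℂ`. A real `2 × 2` matrix `M` acts as `v ↦ a v + b v̄`,
with `‖M‖ = |a| + |b|` and `det M = |a|² - |b|²`; hence for `det M = 1` we get
`‖M‖⁻¹ = |a| - |b|` and `N(M) = log |a|`. A rotation `R_θ` acts as multiplication by
`u = e^{2πiθ}`, so for the product `P_θ = Aₙ R_θ ⋯ A₁ R_θ` one finds `a(P_θ) = uⁿ F(ū²)` for a
polynomial `F` with `F(0) = a(A₁) ⋯ a(Aₙ)`. Since `[[a, b], [b̄, ā]]` preserves the form
`|x|² - |y|²` and `diag(1, v)` does not increase it for `|v| ≤ 1`, `F` has no zero in the closed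
unit disc. Thus `log |F|` is harmonic there, and the mean value property gives
`∫₀¹ N(P_θ) dθ = log |F(0)| = Σ log |a(A_j)| = Σ N(A_j)`.
-/

open Real
noncomputable section

/-- `N(A) = log((‖A‖ + ‖A‖⁻¹)/2)`. -/
def NN (A : Matrix (Fin 2) (Fin 2) ℝ) : ℝ := Real.log ((opNorm A + (opNorm A)⁻¹) / 2)

open Complex ComplexConjugate Polynomial

namespace Matrix

variable (M N : Matrix (Fin 2) (Fin 2) ℝ)

/-- With `ℝ² ≅ ℂ`, `M` acts as `v ↦ M.holCoeff * v + M.antiholCoeff * conj v`. -/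
def holCoeff : ℂ := ⟨(M 0 0 + M 1 1) / 2, (M 1 0 - M 0 1) / 2⟩

def antiholCoeff : ℂ := ⟨(M 0 0 - M 1 1) / 2, (M 0 1 + M 1 0) / 2⟩

lemma holCoeff_mul :
    (M * N).holCoeff = M.holCoeff * N.holCoeff + M.antiholCoeff * conj N.antiholCoeff := by
  simp only [holCoeff, antiholCoeff, Complex.ext_iff, mul_re, mul_im, add_re, add_im, conj_re,
    conj_im, mul_apply, Fin.sum_univ_two]
  constructor <;> ring

lemma antiholCoeff_mul :
    (M * N).antiholCoeff = M.holCoeff * N.antiholCoeff + M.antiholCoeff * conj N.holCoeff := by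
  simp only [holCoeff, antiholCoeff, Complex.ext_iff, mul_re, mul_im, add_re, add_im, conj_re,
    conj_im, mul_apply, Fin.sum_univ_two]
  constructor <;> ring

@[simp] lemma holCoeff_one : holCoeff 1 = 1 := by
  simp [holCoeff, Complex.ext_iff]

@[simp] lemma antiholCoeff_one : antiholCoeff 1 = 0 := by
  simp [antiholCoeff, Complex.ext_iff]

lemma normSq_holCoeff_sub_normSq_antiholCoeff :
    normSq M.holCoeff - normSq M.antiholCoeff = M.det := by
  simp only [holCoeff, antiholCoeff, normSq_apply, det_fin_two]
  ring

variable {M} in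
lemma holCoeff_ne_zero (hM : M.det = 1) : M.holCoeff ≠ 0 := by
  have h := M.normSq_holCoeff_sub_normSq_antiholCoeff
  rw [hM] at h
  rw [← normSq_pos]
  linarith [normSq_nonneg M.antiholCoeff]

lemma toComplex_toEuclideanCLM (x : EuclideanSpace ℝ (Fin 2)) :
    orthonormalBasisOneI.repr.symm (toEuclideanCLM (𝕜 := ℝ) M x) =
      M.holCoeff * orthonormalBasisOneI.repr.symm x
        + M.antiholCoeff * conj (orthonormalBasisOneI.repr.symm x) := by
  simp only [orthonormalBasisOneI_repr_symm_apply, Complex.ext_iff]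
  simp [holCoeff, antiholCoeff, mulVec, dotProduct, Fin.sum_univ_two]
  constructor <;> ring

lemma det_list_prod_eq_one {n R : Type*} [Fintype n] [DecidableEq n] [CommRing R]
    {L : List (Matrix n n R)} (hL : ∀ M ∈ L, M.det = 1) : L.prod.det = 1 := by
  rw [← coe_detMonoidHom, map_list_prod]
  exact List.prod_eq_one fun x hx => by
    obtain ⟨M, hM, rfl⟩ := List.mem_map.mp hx
    exact hL M hM

end Matrix

namespace Complex

lemma exists_norm_eq_one_norm_mul_add_mul_conj (a b : ℂ) :
    ∃ ζ : ℂ, ‖ζ‖ = 1 ∧ ‖a * ζ + b * conj ζ‖ = ‖a‖ + ‖b‖ := by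
  set ζ := exp (↑((arg b - arg a) / 2) * I)
  set ω := exp (↑((arg a + arg b) / 2) * I)
  have ha : a * ζ = ‖a‖ * ω := by
    nth_rw 1 [← norm_mul_exp_arg_mul_I a]
    rw [mul_assoc, ← exp_add]
    congr 2; push_cast; ring
  have hb : b * conj ζ = ‖b‖ * ω := by
    nth_rw 1 [← norm_mul_exp_arg_mul_I b]
    rw [← exp_conj, map_mul, conj_ofReal, conj_I, mul_assoc, ← exp_add]
    congr 2; push_cast; ring
  refine ⟨ζ, norm_exp_ofReal_mul_I _, ?_⟩
  rw [ha, hb, ← add_mul, norm_mul, norm_exp_ofReal_mul_I, mul_one, ← ofReal_add, norm_real,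
    Real.norm_of_nonneg (by positivity)]

lemma normSq_mul_add_mul_sub_normSq_conj_mul_add_conj_mul (a b x y : ℂ) :
    normSq (a * x + b * y) - normSq (conj b * x + conj a * y)
      = (normSq a - normSq b) * (normSq x - normSq y) := by
  simp only [normSq_apply, mul_re, mul_im, add_re, add_im, conj_re, conj_im]
  ring

end Complex

lemma opNorm_eq_norm_holCoeff_add_norm_antiholCoeff (M : Matrix (Fin 2) (Fin 2) ℝ) :
    opNorm M = ‖M.holCoeff‖ + ‖M.antiholCoeff‖ := by
  set e := orthonormalBasisOneI.repr
  have hT (ξ : ℂ) : ‖Matrix.toEuclideanCLM (𝕜 := ℝ) M (e ξ)‖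
      = ‖M.holCoeff * ξ + M.antiholCoeff * conj ξ‖ := by
    rw [← e.symm.norm_map, M.toComplex_toEuclideanCLM, e.symm_apply_apply]
  apply le_antisymm
  · refine ContinuousLinearMap.opNorm_le_bound _ (by positivity) fun x => ?_
    rw [← e.apply_symm_apply x, hT, e.norm_map, add_mul]
    refine (norm_add_le _ _).trans_eq ?_
    rw [norm_mul, norm_mul, Complex.norm_conj]
  · obtain ⟨ζ, hζ, hmax⟩ := exists_norm_eq_one_norm_mul_add_mul_conj M.holCoeff M.antiholCoeff
    calc ‖M.holCoeff‖ + ‖M.antiholCoeff‖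
        = ‖Matrix.toEuclideanCLM (𝕜 := ℝ) M (e ζ)‖ := by rw [hT, hmax]
      _ ≤ opNorm M * ‖e ζ‖ := ContinuousLinearMap.le_opNorm _ _
      _ = opNorm M := by rw [e.norm_map, hζ, mul_one]

lemma NN_eq_log_norm_holCoeff {M : Matrix (Fin 2) (Fin 2) ℝ} (hM : M.det = 1) :
    NN M = Real.log ‖M.holCoeff‖ := by
  have hdet : ‖M.holCoeff‖ ^ 2 - ‖M.antiholCoeff‖ ^ 2 = 1 := by
    rw [← normSq_eq_norm_sq, ← normSq_eq_norm_sq, M.normSq_holCoeff_sub_normSq_antiholCoeff, hM]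
  have hinv : (opNorm M)⁻¹ = ‖M.holCoeff‖ - ‖M.antiholCoeff‖ := by
    rw [opNorm_eq_norm_holCoeff_add_norm_antiholCoeff, inv_eq_of_mul_eq_one_right]
    linear_combination hdet
  rw [NN, hinv, opNorm_eq_norm_holCoeff_add_norm_antiholCoeff]
  ring_nf

lemma log_norm_prod_holCoeff {L : List (Matrix (Fin 2) (Fin 2) ℝ)} (hL : ∀ M ∈ L, M.det = 1) :
    Real.log ‖(L.map Matrix.holCoeff).prod‖ = (L.map NN).sum := by
  induction L with
  | nil => simp
  | cons M L ih =>
    have hL' : ∀ N ∈ L, N.det = 1 := fun N hN => hL N (List.mem_cons_of_mem M hN)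
    have hprod : (L.map Matrix.holCoeff).prod ≠ 0 := List.prod_ne_zero fun h => by
      obtain ⟨N, hN, h0⟩ := List.mem_map.mp h
      exact Matrix.holCoeff_ne_zero (hL' N hN) h0
    rw [List.map_cons, List.prod_cons, norm_mul,
      Real.log_mul (norm_ne_zero_iff.mpr (Matrix.holCoeff_ne_zero (hL M List.mem_cons_self)))
        (norm_ne_zero_iff.mpr hprod), ih hL', List.map_cons, List.sum_cons,
      NN_eq_log_norm_holCoeff (hL M List.mem_cons_self)]

lemma holCoeff_rot (θ : ℝ) : (rot θ).holCoeff = circleMap 0 1 (2 * π * θ) := by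
  rw [circleMap_zero, ofReal_one, one_mul]
  apply Complex.ext
  · rw [exp_ofReal_mul_I_re]; simp [Matrix.holCoeff, rot]
  · rw [exp_ofReal_mul_I_im]; simp [Matrix.holCoeff, rot]

lemma antiholCoeff_rot (θ : ℝ) : (rot θ).antiholCoeff = 0 := by
  simp [Matrix.antiholCoeff, rot, Complex.ext_iff]

lemma det_rot (θ : ℝ) : (rot θ).det = 1 := by
  rw [← Matrix.normSq_holCoeff_sub_normSq_antiholCoeff, holCoeff_rot, antiholCoeff_rot,
    normSq_eq_norm_sq, norm_circleMap_zero]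
  simp

/-- The first column of `∏ [[a, b], [b̄, ā]] * diag(1, X)` over the list, where
`a = M.holCoeff`, `b = M.antiholCoeff`. -/
def transferPoly : List (Matrix (Fin 2) (Fin 2) ℝ) → ℂ[X] × ℂ[X]
  | [] => (1, 0)
  | M :: L => (C M.holCoeff * (transferPoly L).1 + C M.antiholCoeff * X * (transferPoly L).2,
      C (conj M.antiholCoeff) * (transferPoly L).1 + C (conj M.holCoeff) * X * (transferPoly L).2)

lemma eval_zero_transferPoly_fst (L : List (Matrix (Fin 2) (Fin 2) ℝ)) :
    (transferPoly L).1.eval 0 = (L.map Matrix.holCoeff).prod := by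
  induction L with
  | nil => simp [transferPoly]
  | cons M L ih => simp [transferPoly, ih]

lemma one_add_normSq_eval_transferPoly_snd_le {L : List (Matrix (Fin 2) (Fin 2) ℝ)}
    (hL : ∀ M ∈ L, M.det = 1) {v : ℂ} (hv : ‖v‖ ≤ 1) :
    1 + normSq ((transferPoly L).2.eval v) ≤ normSq ((transferPoly L).1.eval v) := by
  induction L with
  | nil => simp [transferPoly]
  | cons M L ih =>
    have ih := ih fun N hN => hL N (List.mem_cons_of_mem M hN)
    have hM := M.normSq_holCoeff_sub_normSq_antiholCoeff
    rw [hL M List.mem_cons_self] at hM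
    have hv : normSq v ≤ 1 := by rw [normSq_eq_norm_sq]; nlinarith [norm_nonneg v]
    have := normSq_mul_add_mul_sub_normSq_conj_mul_add_conj_mul M.holCoeff M.antiholCoeff
      ((transferPoly L).1.eval v) (v * (transferPoly L).2.eval v)
    simp only [transferPoly, eval_add, eval_mul, eval_C, eval_X, mul_assoc]
    rw [hM, normSq_mul] at this
    nlinarith [normSq_nonneg ((transferPoly L).2.eval v)]

lemma holCoeff_prod_map_mul_rotation (L : List (Matrix (Fin 2) (Fin 2) ℝ))
    {R : Matrix (Fin 2) (Fin 2) ℝ} (hR : R.antiholCoeff = 0) (hu : ‖R.holCoeff‖ = 1) :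
    (L.map (· * R)).prod.holCoeff
        = R.holCoeff ^ L.length * (transferPoly L).1.eval (conj R.holCoeff ^ 2) ∧
      conj (L.map (· * R)).prod.antiholCoeff
        = R.holCoeff ^ L.length * (transferPoly L).2.eval (conj R.holCoeff ^ 2) := by
  set u := R.holCoeff
  have hu_conj : u * conj u = 1 := by rw [mul_conj, normSq_eq_norm_sq, hu]; norm_num
  induction L with
  | nil => simp [transferPoly]
  | cons M L ih =>
    obtain ⟨ih₁, ih₂⟩ := ih
    have hMR : (M * R).holCoeff = M.holCoeff * u ∧
        (M * R).antiholCoeff = M.antiholCoeff * conj u := by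
      simp [Matrix.holCoeff_mul, Matrix.antiholCoeff_mul, hR, u]
    simp only [List.map_cons, List.prod_cons, Matrix.holCoeff_mul, Matrix.antiholCoeff_mul,
      hMR.1, hMR.2, map_add, map_mul, conj_conj, transferPoly, eval_add, eval_mul, eval_C, eval_X,
      List.length_cons, pow_succ u L.length]
    rw [ih₁, ih₂]
    constructor
    · linear_combination
        -(M.antiholCoeff * conj u * u ^ L.length * (transferPoly L).2.eval (conj u ^ 2)) * hu_conj
    · linear_combination
        -(conj M.holCoeff * conj u * u ^ L.length * (transferPoly L).2.eval (conj u ^ 2)) * hu_conj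

lemma intervalIntegral_circleMap_int_mul_eq_circleAverage {E : Type*} [NormedAddCommGroup E]
    [NormedSpace ℝ E] {f : ℂ → E} {c : ℂ} {R : ℝ} (hf : CircleIntegrable f c R) {m : ℤ}
    (hm : m ≠ 0) :
    ∫ θ in (0:ℝ)..1, f (circleMap c R (2 * π * m * θ)) = circleAverage f c R := by
  have hper : Function.Periodic (fun t => f (circleMap c R t)) (2 * π) :=
    fun t => by simp only [periodic_circleMap c R t]
  have hm' : (2 * π * m : ℝ) ≠ 0 := by positivity
  have hperiods := hper.intervalIntegral_add_zsmul_eq m 0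
    (hper.intervalIntegrable₀ (by positivity) hf)
  rw [zero_add, zero_add, zsmul_eq_mul, mul_comm, ← Int.cast_smul_eq_zsmul ℝ] at hperiods
  rw [intervalIntegral.integral_comp_mul_left (fun t => f (circleMap c R t)) hm', mul_zero,
    mul_one, hperiods, circleAverage_def, smul_smul]
  congr 1
  field_simp

theorem integral_NN_prod_map_mul_rot {L : List (Matrix (Fin 2) (Fin 2) ℝ)}
    (hL : ∀ M ∈ L, M.det = 1) :
    ∫ θ in (0:ℝ)..1, NN ((L.map (· * rot θ)).prod) = (L.map NN).sum := by
  set F := (transferPoly L).1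
  have hF_analytic : AnalyticOnNhd ℂ (F.eval ·) Set.univ := AnalyticOnNhd.eval_polynomial F
  have hF : ∀ z ∈ Metric.closedBall (0 : ℂ) |1|, F.eval z ≠ 0 := fun z hz h0 => by
    have := one_add_normSq_eval_transferPoly_snd_le hL (v := z) (by simpa using hz)
    rw [h0, map_zero] at this
    linarith [normSq_nonneg ((transferPoly L).2.eval z)]
  have hNN (θ : ℝ) : NN ((L.map (· * rot θ)).prod)
      = Real.log ‖F.eval (circleMap 0 1 (2 * π * (-2 : ℤ) * θ))‖ := by
    have hdet : (L.map (· * rot θ)).prod.det = 1 := Matrix.det_list_prod_eq_one fun N hN => by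
      obtain ⟨M, hM, rfl⟩ := List.mem_map.mp hN
      rw [Matrix.det_mul, hL M hM, det_rot, one_mul]
    have hu : ‖(rot θ).holCoeff‖ = 1 := by rw [holCoeff_rot, norm_circleMap_zero]; simp
    rw [NN_eq_log_norm_holCoeff hdet,
      (holCoeff_prod_map_mul_rotation L (antiholCoeff_rot θ) hu).1, norm_mul, norm_pow, hu,
      one_pow, one_mul, holCoeff_rot, conj_circleMap_zero, circleMap_zero_pow]
    congr 4
    norm_num
    ring
  calc ∫ θ in (0:ℝ)..1, NN ((L.map (· * rot θ)).prod)
      = ∫ θ in (0:ℝ)..1, Real.log ‖F.eval (circleMap 0 1 (2 * π * (-2 : ℤ) * θ))‖ := by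
        simp only [hNN]
    _ = circleAverage (fun z => Real.log ‖F.eval z‖) 0 1 :=
        intervalIntegral_circleMap_int_mul_eq_circleAverage
          (MeromorphicOn.circleIntegrable_log_norm fun z _ => (hF_analytic z trivial).meromorphicAt)
          (by norm_num)
    _ = Real.log ‖F.eval 0‖ :=
        (hF_analytic.mono (Set.subset_univ _)).circleAverage_log_norm_of_ne_zero hF
    _ = (L.map NN).sum := by rw [eval_zero_transferPoly_fst, log_norm_prod_holCoeff hL]

theorem stmt17_general (n : ℕ) (A : Fin n → Matrix (Fin 2) (Fin 2) ℝ)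
    (hA : ∀ j, (A j).det = 1) :
    ∫ θ in (0:ℝ)..1, NN ((List.ofFn fun j : Fin n => A j * rot θ).reverse.prod)
      = ∑ j : Fin n, NN (A j) := by
  have hL : ∀ M ∈ (List.ofFn A).reverse, M.det = 1 := by
    simpa [List.mem_ofFn] using hA
  have hprod (θ : ℝ) : (List.ofFn fun j : Fin n => A j * rot θ).reverse
      = (List.ofFn A).reverse.map (· * rot θ) := by
    rw [List.map_reverse, List.map_ofFn]
    rfl
  simp_rw [hprod, integral_NN_prod_map_mul_rot hL, List.map_reverse, List.sum_reverse,
    List.map_ofFn, List.sum_ofFn]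
  rfl

/-- The Parseval-type identity: for `A₁, …, Aₙ ∈ SL(2,ℝ)`,
`∫₀¹ N(Aₙ R_θ ⋯ A₁ R_θ) dθ = Σ N(A_j)`. -/
theorem stmt17 (n : ℕ) (hn : 1 ≤ n) (A : Fin n → Matrix (Fin 2) (Fin 2) ℝ)
    (hA : ∀ j, (A j).det = 1) :
    ∫ θ in (0:ℝ)..1, NN ((List.ofFn fun j : Fin n => A j * rot θ).reverse.prod)
      = ∑ j : Fin n, NN (A j) :=
  stmt17_general n A hA
end
end
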